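/- arXiv:2006.05122 — 6 statements merged into one kernel-verified Lean document; each statement's English description precedes it below -/
import Mathlib

section
/- Suppose there exist T > 0, G : ℝ₊ → ℝ₊ and μ₀ > 0 such that the wave equation associated with A is approximately observable from B* in time T with cost G and threshold μ₀. Then for every λ ∈ ℂ and every v ∈ D(A) with Av = λ²v and B*v = 0, one has v = 0. -/
/-!
Given an eigenvector `A v = λ² v` with `B* v = 0`, the standing wave `u(t) = e^{iλt} v` is a
classical solution of `u'' + A u = 0` that is invisible to the observation, so approximate
observability bounds the fixed quantity `‖(v, iλ v)‖_{H × H₋₁} ≥ ‖v‖` by `C / μ` for every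
large `μ`; letting `μ → ∞` forces `v = 0`.
-/

open Complex Filter Topology

theorem hasDerivAt_cexp_mul_smul {E : Type*} [NormedAddCommGroup E] [NormedSpace ℂ E]
    (c : ℂ) (v : E) (t : ℝ) :
    HasDerivAt (fun s : ℝ => cexp (c * s) • v) (c • cexp (c * t) • v) t := by
  have hlin : HasDerivAt (fun s : ℝ => c * (s : ℂ)) c t := by
    simpa using (ofRealCLM.hasDerivAt (x := t)).const_mul c
  rw [smul_smul, mul_comm]
  exact ((hasDerivAt_exp (c * t)).comp t hlin).smul_const v

theorem re_inner_apply_self_nonneg_of_add_apply_eq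
    {H : Type*} [NormedAddCommGroup H] [InnerProductSpace ℂ H]
    {A : H → H} {x w : H} (hAx : 0 ≤ (inner ℂ (A x) x : ℂ).re) (hx : A x + x = w) :
    0 ≤ (inner ℂ x w : ℂ).re := by
  rw [← hx, inner_add_right, add_re, ← inner_conj_symm, conj_re]
  exact add_nonneg hAx (inner_self_nonneg (𝕜 := ℂ))

theorem nonpos_of_forall_le_inv_mul {a C μ₀ : ℝ} (h : ∀ μ, μ₀ ≤ μ → a ≤ (1 / μ) * C) :
    a ≤ 0 := by
  have hlim : Tendsto (fun μ : ℝ => (1 / μ) * C) atTop (𝓝 0) := by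
    simpa using tendsto_inv_atTop_zero.mul_const C
  exact ge_of_tendsto hlim (eventually_atTop.2 ⟨μ₀, h⟩)

theorem statement1_general
    {H Y : Type*} [NormedAddCommGroup H] [InnerProductSpace ℂ H] [CompleteSpace H]
    [NormedAddCommGroup Y] [InnerProductSpace ℂ Y] [CompleteSpace Y]
    (D : Submodule ℂ H) (A : H →ₗ[ℂ] H) (B : Y →L[ℂ] H)
    (hpos : ∀ v ∈ D, 0 ≤ (inner ℂ (A v) v : ℂ).re ∧ (inner ℂ (A v) v : ℂ).im = 0)
    -- `R` is the bounded inverse of `A + Id`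
    (R : H →L[ℂ] H)
    (hR1 : ∀ f : H, R f ∈ D ∧ A (R f) + R f = f)
    -- approximate observability for some `T > 0`, cost `G` and threshold `μ₀ > 0`
    (hobs : ∃ T : ℝ, 0 < T ∧ ∃ G : ℝ → ℝ, ∃ μ₀ : ℝ, 0 < μ₀ ∧
      ∀ u u' u'' : ℝ → H,
      (∀ t ∈ Set.Icc (0:ℝ) T, HasDerivAt u (u' t) t) →
      (∀ t ∈ Set.Icc (0:ℝ) T, HasDerivAt u' (u'' t) t) →
      ContinuousOn u'' (Set.Icc (0:ℝ) T) →
      (∀ t ∈ Set.Icc (0:ℝ) T, u t ∈ D) →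
      ContinuousOn (fun t => A (u t)) (Set.Icc (0:ℝ) T) →
      (∀ t ∈ Set.Icc (0:ℝ) T, u'' t + A (u t) = 0) →
      ∀ μ : ℝ, μ₀ ≤ μ →
        Real.sqrt (‖u 0‖ ^ 2 + (inner ℂ (R (u' 0)) (u' 0) : ℂ).re)
          ≤ G μ * Real.sqrt (∫ t in (0:ℝ)..T, ‖(ContinuousLinearMap.adjoint B) (u t)‖ ^ 2)
            + (1 / μ) * Real.sqrt ((inner ℂ (A (u 0) + u 0) (u 0) : ℂ).re + ‖u' 0‖ ^ 2)) :
    ∀ lam : ℂ, ∀ v ∈ D, A v = lam ^ 2 • v → (ContinuousLinearMap.adjoint B) v = 0 →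
      v = 0 := by
  intro lam v hvD hAv hBv
  obtain ⟨T, -, G, μ₀, -, hobs_ineq⟩ := hobs
  set c : ℂ := I * lam
  set u : ℝ → H := fun t => cexp (c * t) • v
  have hAu : ∀ t, A (u t) = lam ^ 2 • u t := fun t => by
    rw [map_smul, hAv, smul_comm]
  have hu_wave : ∀ t, c • c • u t + A (u t) = 0 := fun t => by
    rw [hAu, smul_smul, ← add_smul, ← sq, mul_pow, I_sq, neg_one_mul, neg_add_cancel, zero_smul]
  have hu_unobserved : ∀ t, (ContinuousLinearMap.adjoint B) (u t) = 0 := fun t => by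
    simp [u, hBv]
  have hobs_u := hobs_ineq u (fun t => c • u t) (fun t => c • c • u t)
    (fun t _ => hasDerivAt_cexp_mul_smul c v t)
    (fun t _ => (hasDerivAt_cexp_mul_smul c v t).const_smul c)
    (by fun_prop) (fun t _ => D.smul_mem _ hvD)
    (by simp only [hAu]; fun_prop)
    (fun t _ => hu_wave t)
  have hobservation_zero : ∫ t in (0:ℝ)..T, ‖(ContinuousLinearMap.adjoint B) (u t)‖ ^ 2 = 0 := by
    simp [hu_unobserved]
  simp only [hobservation_zero, Real.sqrt_zero, mul_zero, zero_add] at hobs_u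
  have hsq_nonpos := Real.sqrt_eq_zero'.1
    ((nonpos_of_forall_le_inv_mul hobs_u).antisymm (Real.sqrt_nonneg _))
  have hR_nonneg := re_inner_apply_self_nonneg_of_add_apply_eq
    (hpos _ (hR1 (c • u 0)).1).1 (hR1 (c • u 0)).2
  have hu0 : u 0 = v := by simp [u]
  rw [hu0] at hsq_nonpos hR_nonneg
  simpa using (by linarith : ‖v‖ ^ 2 ≤ 0)

/-- If there exist `T > 0`, a cost function `G` and a threshold `μ₀ > 0`
such that the wave equation associated with `A` is approximately observable from `B*` in
time `T` with cost `G` and threshold `μ₀`, then any eigenfunction-type element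
`v ∈ D(A)` with `A v = λ² v` and `B* v = 0` (for some `λ ∈ ℂ`) vanishes. -/
theorem statement1
    {H Y : Type*} [NormedAddCommGroup H] [InnerProductSpace ℂ H] [CompleteSpace H]
    [NormedAddCommGroup Y] [InnerProductSpace ℂ Y] [CompleteSpace Y]
    (D : Submodule ℂ H) (A : H →ₗ[ℂ] H) (B : Y →L[ℂ] H)
    (hdense : Dense (D : Set H))
    (hsym : ∀ v ∈ D, ∀ w ∈ D, (inner ℂ (A v) w : ℂ) = inner ℂ v (A w))
    (hpos : ∀ v ∈ D, 0 ≤ (inner ℂ (A v) v : ℂ).re ∧ (inner ℂ (A v) v : ℂ).im = 0)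
    (hself : ∀ w w' : H, (∀ v ∈ D, (inner ℂ (A v) w : ℂ) = inner ℂ v w') → w ∈ D ∧ A w = w')
    -- `R` is the bounded inverse of `A + Id`
    (R : H →L[ℂ] H)
    (hR1 : ∀ f : H, R f ∈ D ∧ A (R f) + R f = f)
    (hR2 : ∀ v ∈ D, R (A v + v) = v)
    -- approximate observability for some `T > 0`, cost `G` and threshold `μ₀ > 0`
    (hobs : ∃ T : ℝ, 0 < T ∧ ∃ G : ℝ → ℝ, ∃ μ₀ : ℝ, 0 < μ₀ ∧
      ∀ u u' u'' : ℝ → H,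
      (∀ t ∈ Set.Icc (0:ℝ) T, HasDerivAt u (u' t) t) →
      (∀ t ∈ Set.Icc (0:ℝ) T, HasDerivAt u' (u'' t) t) →
      ContinuousOn u'' (Set.Icc (0:ℝ) T) →
      (∀ t ∈ Set.Icc (0:ℝ) T, u t ∈ D) →
      ContinuousOn (fun t => A (u t)) (Set.Icc (0:ℝ) T) →
      (∀ t ∈ Set.Icc (0:ℝ) T, u'' t + A (u t) = 0) →
      ∀ μ : ℝ, μ₀ ≤ μ →
        Real.sqrt (‖u 0‖ ^ 2 + (inner ℂ (R (u' 0)) (u' 0) : ℂ).re)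
          ≤ G μ * Real.sqrt (∫ t in (0:ℝ)..T, ‖(ContinuousLinearMap.adjoint B) (u t)‖ ^ 2)
            + (1 / μ) * Real.sqrt ((inner ℂ (A (u 0) + u 0) (u 0) : ℂ).re + ‖u' 0‖ ^ 2)) :
    ∀ lam : ℂ, ∀ v ∈ D, A v = lam ^ 2 • v → (ContinuousLinearMap.adjoint B) v = 0 →
      v = 0 :=
  statement1_general D A B hpos R hR1 hobs
end

section
/- Assume Hypothesis (R) with a function G satisfying G(μ) ≥ c₀ > 0 for all μ ≥ 0 and with λ₀ ≥ 1, and set K := (1 + √2 ‖B‖)² + 2√2 / c₀. Then for every real λ ≥ λ₀² and every v ∈ D(A): ‖v‖_H ≤ K · G(√λ)² · ‖(A − λ + i BB*)v‖_H. -/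
open Complex

/-! Put `f := (A − λ + i BB*)v` and `t := ‖B*v‖`. Since `⟪v, Av⟫` is real,
`t² = Im ⟪v, f⟫ ≤ ‖v‖ ‖f‖`. Hypothesis (R) at `√λ` and the triangle inequality give
`‖v‖ ≤ G(√λ) ((1 + ‖B‖) t + ‖f‖)`, and AM–GM applied to `t ≤ √(‖v‖ ‖f‖)` absorbs the
`t`-term into the left-hand side. -/

lemma sq_norm_adjoint_apply_le_norm_mul_norm
    {H Y : Type*} [NormedAddCommGroup H] [InnerProductSpace ℂ H] [CompleteSpace H]
    [NormedAddCommGroup Y] [InnerProductSpace ℂ Y] [CompleteSpace Y]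
    (B : Y →L[ℂ] H) {v w : H} (hw : (inner ℂ v w).im = 0) :
    ‖B.adjoint v‖ ^ 2 ≤ ‖v‖ * ‖w + I • B (B.adjoint v)‖ := by
  have him : (inner ℂ v (w + I • B (B.adjoint v))).im = ‖B.adjoint v‖ ^ 2 := by
    rw [inner_add_right, inner_smul_right, ← ContinuousLinearMap.adjoint_inner_left,
      inner_self_eq_norm_sq_to_K]
    simp [hw, ← ofReal_pow]
  calc ‖B.adjoint v‖ ^ 2 = (inner ℂ v (w + I • B (B.adjoint v))).im := him.symm
    _ ≤ ‖inner ℂ v (w + I • B (B.adjoint v))‖ := (le_abs_self _).trans (abs_im_le_norm _)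
    _ ≤ ‖v‖ * ‖w + I • B (B.adjoint v)‖ := norm_inner_le_norm _ _

lemma le_mul_of_le_mul_add_mul_of_sq_le {v F t a g : ℝ} (hv : 0 ≤ v) (hF : 0 ≤ F) (ha : 0 ≤ a)
    (ht : 0 ≤ t) (hle : v ≤ a * t + g * F) (hsq : t ^ 2 ≤ v * F) :
    v ≤ (a ^ 2 + 2 * g) * F := by
  have hamgm : 2 * a * t ≤ a ^ 2 * F + v := by
    refine (pow_le_pow_iff_left₀ (by positivity) (by positivity) two_ne_zero).1 ?_
    nlinarith [sq_nonneg (a ^ 2 * F - v), mul_le_mul_of_nonneg_left hsq (sq_nonneg a)]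
  linarith

lemma sq_mul_one_add_add_two_mul_le {G b c₀ : ℝ} (hb : 0 ≤ b) (hc₀ : 0 < c₀) (hG : c₀ ≤ G) :
    (G * (1 + b)) ^ 2 + 2 * G ≤ ((1 + Real.sqrt 2 * b) ^ 2 + 2 * Real.sqrt 2 / c₀) * G ^ 2 := by
  have hs : 1 ≤ Real.sqrt 2 := Real.one_le_sqrt.2 one_le_two
  have hB : (1 + b) ^ 2 ≤ (1 + Real.sqrt 2 * b) ^ 2 := by
    gcongr
    exact le_mul_of_one_le_left hb hs
  have hc : 2 * G ≤ 2 * Real.sqrt 2 / c₀ * G ^ 2 := by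
    rw [div_mul_eq_mul_div, le_div_iff₀ hc₀]
    nlinarith
  nlinarith [mul_le_mul_of_nonneg_right hB (sq_nonneg G)]

theorem statement6_general
    {H Y : Type*} [NormedAddCommGroup H] [InnerProductSpace ℂ H] [CompleteSpace H]
    [NormedAddCommGroup Y] [InnerProductSpace ℂ Y] [CompleteSpace Y]
    (D : Submodule ℂ H) (A : H →ₗ[ℂ] H) (B : Y →L[ℂ] H)
    (hpos : ∀ v ∈ D, 0 ≤ (inner ℂ (A v) v : ℂ).re ∧ (inner ℂ (A v) v : ℂ).im = 0)
    (G : ℝ → ℝ) (c₀ : ℝ) (hc₀ : 0 < c₀) (hGc₀ : ∀ μ : ℝ, 0 ≤ μ → c₀ ≤ G μ)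
    (lam₀ : ℝ)
    (hR : ∀ v ∈ D, ∀ lam : ℝ, lam₀ ≤ lam →
      ‖v‖ ≤ G lam * (‖(ContinuousLinearMap.adjoint B) v‖
          + ‖A v - ((lam : ℂ) ^ 2) • v‖)) :
    ∀ lam : ℝ, lam₀ ^ 2 ≤ lam → ∀ v ∈ D,
      ‖v‖ ≤ ((1 + Real.sqrt 2 * ‖B‖) ^ 2 + 2 * Real.sqrt 2 / c₀)
              * (G (Real.sqrt lam)) ^ 2
            * ‖A v - (lam : ℂ) • v
                + Complex.I • B ((ContinuousLinearMap.adjoint B) v)‖ := by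
  intro lam hlam v hv
  set y := B.adjoint v
  set f := A v - (lam : ℂ) • v + I • B y
  have hlam0 : 0 ≤ lam := (sq_nonneg _).trans hlam
  have hG : c₀ ≤ G (Real.sqrt lam) := hGc₀ _ (Real.sqrt_nonneg _)
  have hRv : ‖v‖ ≤ G (Real.sqrt lam) * (‖y‖ + ‖A v - (lam : ℂ) • v‖) := by
    have := hR v hv _ ((le_abs_self lam₀).trans (Real.abs_le_sqrt hlam))
    rwa [← ofReal_pow, Real.sq_sqrt hlam0] at this
  have hreal : (inner ℂ v (A v - (lam : ℂ) • v)).im = 0 := by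
    have hA : (inner ℂ v (A v)).im = 0 := by
      rw [← inner_conj_symm, conj_im, (hpos v hv).2, neg_zero]
    rw [inner_sub_right, inner_smul_right, inner_self_eq_norm_sq_to_K]
    simp [hA, ← ofReal_pow]
  have htri : ‖A v - (lam : ℂ) • v‖ ≤ ‖f‖ + ‖B‖ * ‖y‖ := by
    calc ‖A v - (lam : ℂ) • v‖ = ‖f - I • B y‖ := by simp [f]
      _ ≤ ‖f‖ + ‖B y‖ := by simpa [norm_smul] using norm_sub_le f (I • B y)
      _ ≤ ‖f‖ + ‖B‖ * ‖y‖ := by gcongr; exact B.le_opNorm y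
  have hle : ‖v‖ ≤ G (Real.sqrt lam) * (1 + ‖B‖) * ‖y‖ + G (Real.sqrt lam) * ‖f‖ := by
    nlinarith [hc₀.trans_le hG]
  calc ‖v‖ ≤ ((G (Real.sqrt lam) * (1 + ‖B‖)) ^ 2 + 2 * G (Real.sqrt lam)) * ‖f‖ :=
        le_mul_of_le_mul_add_mul_of_sq_le (norm_nonneg _) (norm_nonneg _)
          (by positivity [hc₀.trans_le hG]) (norm_nonneg _) hle
          (sq_norm_adjoint_apply_le_norm_mul_norm B hreal)
    _ ≤ _ := by
        gcongr
        exact sq_mul_one_add_add_two_mul_le (norm_nonneg _) hc₀ hG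

/-- Assume Hypothesis (R): `‖v‖ ≤ G(λ)(‖B*v‖ + ‖(A − λ²)v‖)` for all
`v ∈ D(A)` and real `λ ≥ λ₀`, with `G(μ) ≥ c₀ > 0` for all `μ ≥ 0` and `λ₀ ≥ 1`. Set
`K = (1 + √2‖B‖)² + 2√2/c₀`. Then for every real `λ ≥ λ₀²` and every `v ∈ D(A)`:
`‖v‖ ≤ K G(√λ)² ‖(A − λ + i BB*)v‖`. -/
theorem statement6
    {H Y : Type*} [NormedAddCommGroup H] [InnerProductSpace ℂ H] [CompleteSpace H]
    [NormedAddCommGroup Y] [InnerProductSpace ℂ Y] [CompleteSpace Y]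
    (D : Submodule ℂ H) (A : H →ₗ[ℂ] H) (B : Y →L[ℂ] H)
    (hdense : Dense (D : Set H))
    (hsym : ∀ v ∈ D, ∀ w ∈ D, (inner ℂ (A v) w : ℂ) = inner ℂ v (A w))
    (hpos : ∀ v ∈ D, 0 ≤ (inner ℂ (A v) v : ℂ).re ∧ (inner ℂ (A v) v : ℂ).im = 0)
    (hself : ∀ w w' : H, (∀ v ∈ D, (inner ℂ (A v) w : ℂ) = inner ℂ v w') → w ∈ D ∧ A w = w')
    (G : ℝ → ℝ) (c₀ : ℝ) (hc₀ : 0 < c₀) (hGc₀ : ∀ μ : ℝ, 0 ≤ μ → c₀ ≤ G μ)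
    (lam₀ : ℝ) (hlam₀ : 1 ≤ lam₀)
    (hR : ∀ v ∈ D, ∀ lam : ℝ, lam₀ ≤ lam →
      ‖v‖ ≤ G lam * (‖(ContinuousLinearMap.adjoint B) v‖
          + ‖A v - ((lam : ℂ) ^ 2) • v‖)) :
    ∀ lam : ℝ, lam₀ ^ 2 ≤ lam → ∀ v ∈ D,
      ‖v‖ ≤ ((1 + Real.sqrt 2 * ‖B‖) ^ 2 + 2 * Real.sqrt 2 / c₀)
              * (G (Real.sqrt lam)) ^ 2
            * ‖A v - (lam : ℂ) • v
                + Complex.I • B ((ContinuousLinearMap.adjoint B) v)‖ :=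
  statement6_general D A B hpos G c₀ hc₀ hGc₀ lam₀ hR
end

section
/- Assume Hypothesis (UCP). If z ∈ ℂ and u ∈ D(A) with u ≠ 0 satisfy A_S u = z u, then −‖B*‖² ≤ Re z < 0 and Im z ≥ 0. -/
/-!
Pairing `i A u - B B* u = z u` with `u` gives `z ‖u‖² = i ⟪u, A u⟫ - ‖B* u‖²`, where
`⟪u, A u⟫ ≥ 0` is real. Hence `Re z ‖u‖² = -‖B* u‖² ≥ -‖B*‖² ‖u‖²` and `Im z ‖u‖² = ⟪A u, u⟫ ≥ 0`.
The strict inequality `Re z < 0` amounts to `B* u ≠ 0`: otherwise `A u = -i z u = λ² u` for a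
square root `λ` of `-i z`, and unique continuation forces `u = 0`.
-/

open Complex
open scoped InnerProduct InnerProductSpace

section DampedEigenvector

variable {H Y : Type*} [NormedAddCommGroup H] [InnerProductSpace ℂ H] [CompleteSpace H]
  [NormedAddCommGroup Y] [InnerProductSpace ℂ Y] [CompleteSpace Y]
  {A : H →ₗ[ℂ] H} {B : Y →L[ℂ] H} {z : ℂ} {u : H}

theorem inner_apply_adjoint_apply_self (B : Y →L[ℂ] H) (u : H) :
    ⟪u, B ((B†) u)⟫_ℂ = (‖(B†) u‖ : ℂ) ^ 2 := by
  rw [← ContinuousLinearMap.adjoint_inner_left, inner_self_eq_norm_sq_to_K]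
  rfl

theorem mul_normSq_eq_of_damped_eigen (heig : I • A u - B ((B†) u) = z • u) :
    z * (‖u‖ : ℂ) ^ 2 = I * ⟪u, A u⟫_ℂ - (‖(B†) u‖ : ℂ) ^ 2 := by
  have h := congrArg (fun w => ⟪u, w⟫_ℂ) heig
  simp only [inner_sub_right, inner_smul_right, inner_apply_adjoint_apply_self,
    inner_self_eq_norm_sq_to_K] at h
  exact h.symm

theorem re_mul_normSq_of_damped_eigen (hAu : (⟪A u, u⟫_ℂ).im = 0)
    (heig : I • A u - B ((B†) u) = z • u) : z.re * ‖u‖ ^ 2 = -‖(B†) u‖ ^ 2 := by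
  have h := congrArg re (mul_normSq_eq_of_damped_eigen heig)
  rw [← inner_conj_symm] at h
  simp only [← ofReal_pow, re_mul_ofReal, sub_re, I_mul_re, conj_im, hAu, neg_zero, ofReal_re] at h
  linarith

theorem im_mul_normSq_of_damped_eigen (heig : I • A u - B ((B†) u) = z • u) :
    z.im * ‖u‖ ^ 2 = (⟪A u, u⟫_ℂ).re := by
  have h := congrArg im (mul_normSq_eq_of_damped_eigen heig)
  rw [← inner_conj_symm] at h
  simpa only [← ofReal_pow, im_mul_ofReal, sub_im, I_mul_im, conj_re, ofReal_im,
    sub_zero] using h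

theorem apply_eq_smul_of_damped_eigen_of_adjoint_apply_eq_zero
    (heig : I • A u - B ((B†) u) = z • u) (hB : (B†) u = 0) : A u = (-I * z) • u := by
  rw [hB, map_zero, sub_zero] at heig
  rw [mul_smul, ← heig, smul_smul, neg_mul, I_mul_I, neg_neg, one_smul]

end DampedEigenvector

theorem statement8_general
    {H Y : Type*} [NormedAddCommGroup H] [InnerProductSpace ℂ H] [CompleteSpace H]
    [NormedAddCommGroup Y] [InnerProductSpace ℂ Y] [CompleteSpace Y]
    (D : Submodule ℂ H) (A : H →ₗ[ℂ] H) (B : Y →L[ℂ] H)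
    (hpos : ∀ v ∈ D, 0 ≤ (inner ℂ (A v) v : ℂ).re ∧ (inner ℂ (A v) v : ℂ).im = 0)
    (hUCP : ∀ lam : ℂ, ∀ v ∈ D, A v = lam ^ 2 • v →
      (ContinuousLinearMap.adjoint B) v = 0 → v = 0)
    (z : ℂ) (u : H) (hu : u ∈ D) (hu0 : u ≠ 0)
    (heig : Complex.I • A u - B ((ContinuousLinearMap.adjoint B) u) = z • u) :
    -‖ContinuousLinearMap.adjoint B‖ ^ 2 ≤ z.re ∧ z.re < 0 ∧ 0 ≤ z.im := by
  obtain ⟨hAu_re, hAu_im⟩ := hpos u hu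
  have hu_pos : 0 < ‖u‖ ^ 2 := by positivity
  have hBu : (B†) u ≠ 0 := by
    intro hB
    obtain ⟨lam, hlam⟩ := IsAlgClosed.exists_pow_nat_eq (-I * z) two_pos
    refine hu0 (hUCP lam u hu ?_ hB)
    rw [hlam]
    exact apply_eq_smul_of_damped_eigen_of_adjoint_apply_eq_zero heig hB
  have hre := re_mul_normSq_of_damped_eigen hAu_im heig
  have him := im_mul_normSq_of_damped_eigen heig
  refine ⟨?_, ?_, ?_⟩
  · have hbound : ‖(B†) u‖ ^ 2 ≤ ‖(B†)‖ ^ 2 * ‖u‖ ^ 2 := by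
      rw [← mul_pow]
      gcongr
      exact (B†).le_opNorm u
    exact le_of_mul_le_mul_right (by linarith) hu_pos
  · have hBu_pos : 0 < ‖(B†) u‖ ^ 2 := by positivity
    exact neg_of_mul_neg_left (by linarith) hu_pos.le
  · exact nonneg_of_mul_nonneg_left (him ▸ hAu_re) hu_pos

/-- Assume the unique continuation property (UCP): any `v ∈ D(A)` with
`Av = λ²v` and `B*v = 0` vanishes. If `z ∈ ℂ` is an eigenvalue of the damped Schrödinger
generator `A_S = iA − BB*`, i.e. `A_S u = z u` for some nonzero `u ∈ D(A)`, then
`−‖B*‖² ≤ Re z < 0` and `Im z ≥ 0`. -/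
theorem statement8
    {H Y : Type*} [NormedAddCommGroup H] [InnerProductSpace ℂ H] [CompleteSpace H]
    [NormedAddCommGroup Y] [InnerProductSpace ℂ Y] [CompleteSpace Y]
    (D : Submodule ℂ H) (A : H →ₗ[ℂ] H) (B : Y →L[ℂ] H)
    (hdense : Dense (D : Set H))
    (hsym : ∀ v ∈ D, ∀ w ∈ D, (inner ℂ (A v) w : ℂ) = inner ℂ v (A w))
    (hpos : ∀ v ∈ D, 0 ≤ (inner ℂ (A v) v : ℂ).re ∧ (inner ℂ (A v) v : ℂ).im = 0)
    (hself : ∀ w w' : H, (∀ v ∈ D, (inner ℂ (A v) w : ℂ) = inner ℂ v w') → w ∈ D ∧ A w = w')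
    (hUCP : ∀ lam : ℂ, ∀ v ∈ D, A v = lam ^ 2 • v →
      (ContinuousLinearMap.adjoint B) v = 0 → v = 0)
    (z : ℂ) (u : H) (hu : u ∈ D) (hu0 : u ≠ 0)
    (heig : Complex.I • A u - B ((ContinuousLinearMap.adjoint B) u) = z • u) :
    -‖ContinuousLinearMap.adjoint B‖ ^ 2 ≤ z.re ∧ z.re < 0 ∧ 0 ≤ z.im :=
  statement8_general D A B hpos hUCP z u hu hu0 heig
end

section
/- Assume Hypothesis (R) with a function G satisfying G(μ) ≥ c₀ > 0 for all μ ≥ 0 and with λ₀ ≥ 1, and assume A has compact resolvent. Set K := (1 + √2 ‖B‖)² + 2√2 / c₀. Then for every real λ ≥ λ₀², the operator iλ·Id − A_S : D(A) → H is bijective and ‖(iλ·Id − A_S)^{-1} f‖_H ≤ K·G(√λ)²·‖f‖_H for all f ∈ H. -/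
/-!
Write `f = (iλ - A_S) v` for `v ∈ D`. Since `⟪A v, v⟫` is real, `Re ⟪f, v⟫ = ‖B* v‖²`, so
`‖B* v‖² ≤ ‖f‖ ‖v‖`, while `(A - λ) v = i f - i BB* v` gives `‖(A - λ) v‖ ≤ ‖f‖ + ‖B‖ ‖B* v‖`.
Inserting both into (R) at `√λ` and absorbing `‖v‖` by AM-GM gives `‖v‖ ≤ K G(√λ)² ‖f‖`, hence
injectivity. Self-adjointness makes `A`, hence `iλ - A_S`, closed, so by the estimate its range
is closed. The range is also dense: a vector `w` orthogonal to it lies in `D` with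
`A w = λ w + i BB* w`, then `Re ⟪f, w⟫ = 0` for `f = (iλ - A_S) w` forces `B* w = 0`, so
`A w = λ w` and (R) gives `w = 0`.
-/

open Complex Filter
open scoped InnerProduct InnerProductSpace

lemma le_mul_of_le_mul_add_of_sq_le {a g s t β : ℝ} (hs : 0 ≤ s) (h : t ≤ a * β + g * s)
    (hβ : β ^ 2 ≤ s * t) : t ≤ (a ^ 2 + 2 * g) * s := by
  -- AM-GM: `2 a β ≤ a² s + t`, which absorbs half of `t`
  rcases hs.eq_or_lt with rfl | hs
  · nlinarith
  · nlinarith [sq_nonneg (a * s - β), mul_le_mul_of_nonneg_left h hs.le]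

lemma sq_mul_one_add_add_le {b c₀ g : ℝ} (hb : 0 ≤ b) (hc₀ : 0 < c₀) (hg : c₀ ≤ g) :
    (g * (1 + b)) ^ 2 + 2 * g ≤ ((1 + √2 * b) ^ 2 + 2 * √2 / c₀) * g ^ 2 := by
  have hs2 : 1 ≤ √2 := Real.one_le_sqrt.2 one_le_two
  have hb' : (1 + b) ^ 2 ≤ (1 + √2 * b) ^ 2 := by gcongr; nlinarith
  have hg' : g ≤ √2 / c₀ * g ^ 2 := by
    rw [div_mul_eq_mul_div, le_div_iff₀ hc₀]
    nlinarith
  calc (g * (1 + b)) ^ 2 + 2 * g = (1 + b) ^ 2 * g ^ 2 + 2 * g := by ring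
    _ ≤ (1 + √2 * b) ^ 2 * g ^ 2 + 2 * (√2 / c₀ * g ^ 2) := by gcongr
    _ = ((1 + √2 * b) ^ 2 + 2 * √2 / c₀) * g ^ 2 := by ring

theorem Submodule.isClosed_map_of_isClosed_graph {R E F : Type*} [Ring R]
    [NormedAddCommGroup E] [CompleteSpace E] [NormedAddCommGroup F] [Module R E] [Module R F]
    (D : Submodule R E) (T : E →ₗ[R] F) (hT : IsClosed {p : E × F | p.1 ∈ D ∧ T p.1 = p.2})
    (C : ℝ) (hC : ∀ v ∈ D, ‖v‖ ≤ C * ‖T v‖) : IsClosed (D.map T : Set F) := by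
  refine IsSeqClosed.isClosed fun u f hu hf => ?_
  choose v hvD hvu using fun n => Submodule.mem_map.mp (hu n)
  obtain ⟨b, hb0, hbu, hb⟩ := cauchySeq_iff_le_tendsto_0.1 hf.cauchySeq
  have hv : CauchySeq v := by
    refine cauchySeq_iff_le_tendsto_0.2
      ⟨fun N => |C| * b N, fun N => mul_nonneg (abs_nonneg C) (hb0 N), fun n m N hn hm => ?_,
        by simpa using hb.const_mul |C|⟩
    calc dist (v n) (v m) ≤ C * ‖T (v n - v m)‖ := by
          rw [dist_eq_norm]; exact hC _ (D.sub_mem (hvD n) (hvD m))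
      _ ≤ |C| * dist (u n) (u m) := by
          rw [map_sub, hvu, hvu, ← dist_eq_norm]; gcongr; exact le_abs_self C
      _ ≤ |C| * b N := by gcongr; exact hbu n m N hn hm
  obtain ⟨x, hx⟩ := cauchySeq_tendsto_of_complete hv
  obtain ⟨hxD, hxf⟩ : x ∈ D ∧ T x = f :=
    hT.mem_of_tendsto (hx.prodMk_nhds hf) (Eventually.of_forall fun n => ⟨hvD n, hvu n⟩)
  exact ⟨x, hxD, hxf⟩

lemma isClosed_graph_of_forall_inner_eq {𝕜 E : Type*} [RCLike 𝕜] [NormedAddCommGroup E]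
    [InnerProductSpace 𝕜 E] {D : Submodule 𝕜 E} {A : E →ₗ[𝕜] E}
    (hsym : ∀ v ∈ D, ∀ w ∈ D, ⟪A v, w⟫_𝕜 = ⟪v, A w⟫_𝕜)
    (hself : ∀ w w' : E, (∀ v ∈ D, ⟪A v, w⟫_𝕜 = ⟪v, w'⟫_𝕜) → w ∈ D ∧ A w = w') :
    IsClosed {p : E × E | p.1 ∈ D ∧ A p.1 = p.2} := by
  have hgraph : {p : E × E | p.1 ∈ D ∧ A p.1 = p.2} =
      ⋂ v ∈ D, {p : E × E | ⟪A v, p.1⟫_𝕜 = ⟪v, p.2⟫_𝕜} := by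
    ext ⟨w, w'⟩
    simp only [Set.mem_ofPred_eq, Set.mem_iInter]
    exact ⟨fun ⟨hw, hAw⟩ v hv => hAw ▸ hsym v hv w hw, hself w w'⟩
  rw [hgraph]
  exact isClosed_biInter fun v _ => isClosed_eq (by fun_prop) (by fun_prop)

section DampedOperator

variable {H Y : Type*} [NormedAddCommGroup H] [InnerProductSpace ℂ H] [CompleteSpace H]
  [NormedAddCommGroup Y] [InnerProductSpace ℂ Y] [CompleteSpace Y]
  {D : Submodule ℂ H} {A : H →ₗ[ℂ] H} (B : Y →L[ℂ] H) (lam : ℝ)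

variable (A) in
/-- `iλ - A_S`, where `A_S = iA - BB*`. -/
noncomputable def shiftedDampedOp : H →ₗ[ℂ] H :=
  (I * lam) • LinearMap.id - (I • A - (B ∘L B†).toLinearMap)

lemma shiftedDampedOp_apply (v : H) :
    shiftedDampedOp A B lam v = (I * lam) • v - (I • A v - B ((B†) v)) := rfl

lemma shiftedDampedOp_eq_iff {x y : H} :
    shiftedDampedOp A B lam x = y ↔ A x = (lam : ℂ) • x - I • B ((B†) x) + I • y := by
  rw [shiftedDampedOp_apply]
  constructor
  · rintro rfl
    match_scalars <;> simp [Complex.ext_iff]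
  · intro h
    rw [h]
    match_scalars <;> simp

lemma isClosed_graph_shiftedDampedOp (hA : IsClosed {p : H × H | p.1 ∈ D ∧ A p.1 = p.2}) :
    IsClosed {p : H × H | p.1 ∈ D ∧ shiftedDampedOp A B lam p.1 = p.2} := by
  have hgraph : {p : H × H | p.1 ∈ D ∧ shiftedDampedOp A B lam p.1 = p.2} =
      (fun p : H × H => (p.1, (lam : ℂ) • p.1 - I • B ((B†) p.1) + I • p.2)) ⁻¹'
        {p : H × H | p.1 ∈ D ∧ A p.1 = p.2} := by
    ext
    simp only [Set.mem_ofPred_eq, Set.mem_preimage, shiftedDampedOp_eq_iff]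
  rw [hgraph]
  exact hA.preimage (by fun_prop)

lemma inner_shiftedDampedOp_left (v w : H) :
    ⟪shiftedDampedOp A B lam v, w⟫_ℂ =
      I * (⟪A v, w⟫_ℂ - ⟪v, (lam : ℂ) • w + I • B ((B†) w)⟫_ℂ) := by
  simp only [shiftedDampedOp_apply, inner_sub_left, inner_smul_left, inner_add_right,
    inner_smul_right, map_mul, conj_I, conj_ofReal]
  rw [← ContinuousLinearMap.adjoint_inner_right B ((B†) v) w,
    ← ContinuousLinearMap.adjoint_inner_left B ((B†) w) v]
  linear_combination ⟪(B†) v, (B†) w⟫_ℂ * I_sq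

lemma re_inner_shiftedDampedOp_self (v : H) :
    (⟪shiftedDampedOp A B lam v, v⟫_ℂ).re = ‖(B†) v‖ ^ 2 - (⟪A v, v⟫_ℂ).im := by
  rw [inner_shiftedDampedOp_left, inner_add_right, inner_smul_right, inner_smul_right,
    ← ContinuousLinearMap.adjoint_inner_left, inner_self_eq_norm_sq_to_K,
    inner_self_eq_norm_sq_to_K]
  simp [← ofReal_pow]

lemma sq_norm_adjoint_le {v : H} (him : (⟪A v, v⟫_ℂ).im = 0) :
    ‖(B†) v‖ ^ 2 ≤ ‖shiftedDampedOp A B lam v‖ * ‖v‖ :=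
  calc ‖(B†) v‖ ^ 2 = (⟪shiftedDampedOp A B lam v, v⟫_ℂ).re := by
        rw [re_inner_shiftedDampedOp_self, him, sub_zero]
    _ ≤ ‖⟪shiftedDampedOp A B lam v, v⟫_ℂ‖ := re_le_norm _
    _ ≤ ‖shiftedDampedOp A B lam v‖ * ‖v‖ := norm_inner_le_norm _ _

lemma norm_sub_smul_le (v : H) :
    ‖A v - (lam : ℂ) • v‖ ≤ ‖shiftedDampedOp A B lam v‖ + ‖B‖ * ‖(B†) v‖ :=
  calc ‖A v - (lam : ℂ) • v‖ = ‖I • shiftedDampedOp A B lam v - I • B ((B†) v)‖ := by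
        rw [(shiftedDampedOp_eq_iff B lam).1 rfl]; congr 1; abel
    _ ≤ ‖shiftedDampedOp A B lam v‖ + ‖B ((B†) v)‖ := by
        simpa only [norm_smul, norm_I, one_mul] using
          norm_sub_le (I • shiftedDampedOp A B lam v) (I • B ((B†) v))
    _ ≤ ‖shiftedDampedOp A B lam v‖ + ‖B‖ * ‖(B†) v‖ := by
        gcongr; exact B.le_opNorm _

lemma norm_le_mul_norm_shiftedDampedOp {g : ℝ} (hg : 0 ≤ g) {v : H} (him : (⟪A v, v⟫_ℂ).im = 0)
    (hR : ‖v‖ ≤ g * (‖(B†) v‖ + ‖A v - (lam : ℂ) • v‖)) :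
    ‖v‖ ≤ ((g * (1 + ‖B‖)) ^ 2 + 2 * g) * ‖shiftedDampedOp A B lam v‖ := by
  refine le_mul_of_le_mul_add_of_sq_le (norm_nonneg _) ?_ (sq_norm_adjoint_le B lam him)
  calc ‖v‖ ≤ g * (‖(B†) v‖ + (‖shiftedDampedOp A B lam v‖ + ‖B‖ * ‖(B†) v‖)) := by
        grw [← norm_sub_smul_le]; exact hR
    _ = g * (1 + ‖B‖) * ‖(B†) v‖ + g * ‖shiftedDampedOp A B lam v‖ := by ring

lemma orthogonal_map_shiftedDampedOp_eq_bot
    (hself : ∀ w w' : H, (∀ v ∈ D, ⟪A v, w⟫_ℂ = ⟪v, w'⟫_ℂ) → w ∈ D ∧ A w = w')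
    (him : ∀ v ∈ D, (⟪A v, v⟫_ℂ).im = 0) {g : ℝ}
    (hR : ∀ v ∈ D, ‖v‖ ≤ g * (‖(B†) v‖ + ‖A v - (lam : ℂ) • v‖)) :
    (D.map (shiftedDampedOp A B lam))ᗮ = ⊥ := by
  refine (Submodule.eq_bot_iff _).2 fun w hw => ?_
  have horth : ∀ v ∈ D, ⟪shiftedDampedOp A B lam v, w⟫_ℂ = 0 := fun v hv =>
    (Submodule.mem_orthogonal _ w).1 hw _ (Submodule.mem_map_of_mem hv)
  obtain ⟨hwD, hAw⟩ := hself w ((lam : ℂ) • w + I • B ((B†) w)) fun v hv => by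
    simpa only [inner_shiftedDampedOp_left, mul_eq_zero, I_ne_zero, false_or, sub_eq_zero]
      using horth v hv
  have hBw : (B†) w = 0 := by
    have hre := re_inner_shiftedDampedOp_self (A := A) B lam w
    rwa [horth w hwD, him w hwD, zero_re, sub_zero, eq_comm, sq_eq_zero_iff, norm_eq_zero] at hre
  have hAw' : A w - (lam : ℂ) • w = 0 := by rw [hAw, hBw]; simp
  have hw0 := hR w hwD
  rw [hBw, hAw', norm_zero, norm_zero, add_zero, mul_zero] at hw0
  exact norm_le_zero_iff.1 hw0

lemma map_shiftedDampedOp_eq_top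
    (hsym : ∀ v ∈ D, ∀ w ∈ D, ⟪A v, w⟫_ℂ = ⟪v, A w⟫_ℂ)
    (hself : ∀ w w' : H, (∀ v ∈ D, ⟪A v, w⟫_ℂ = ⟪v, w'⟫_ℂ) → w ∈ D ∧ A w = w')
    (him : ∀ v ∈ D, (⟪A v, v⟫_ℂ).im = 0) {g : ℝ} (hg : 0 ≤ g)
    (hR : ∀ v ∈ D, ‖v‖ ≤ g * (‖(B†) v‖ + ‖A v - (lam : ℂ) • v‖)) :
    D.map (shiftedDampedOp A B lam) = ⊤ := by
  have hclosed : IsClosed (D.map (shiftedDampedOp A B lam) : Set H) :=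
    D.isClosed_map_of_isClosed_graph _
      (isClosed_graph_shiftedDampedOp B lam (isClosed_graph_of_forall_inner_eq hsym hself)) _
      fun v hv => norm_le_mul_norm_shiftedDampedOp B lam hg (him v hv) (hR v hv)
  have : CompleteSpace (D.map (shiftedDampedOp A B lam)) := hclosed.completeSpace_coe
  exact Submodule.orthogonal_eq_bot_iff.1
    (orthogonal_map_shiftedDampedOp_eq_bot B lam hself him hR)

end DampedOperator

theorem statement9_general
    {H Y : Type*} [NormedAddCommGroup H] [InnerProductSpace ℂ H] [CompleteSpace H]
    [NormedAddCommGroup Y] [InnerProductSpace ℂ Y] [CompleteSpace Y]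
    (D : Submodule ℂ H) (A : H →ₗ[ℂ] H) (B : Y →L[ℂ] H)
    (hsym : ∀ v ∈ D, ∀ w ∈ D, (inner ℂ (A v) w : ℂ) = inner ℂ v (A w))
    (hpos : ∀ v ∈ D, 0 ≤ (inner ℂ (A v) v : ℂ).re ∧ (inner ℂ (A v) v : ℂ).im = 0)
    (hself : ∀ w w' : H, (∀ v ∈ D, (inner ℂ (A v) w : ℂ) = inner ℂ v w') → w ∈ D ∧ A w = w')
    (G : ℝ → ℝ) (c₀ : ℝ) (hc₀ : 0 < c₀) (hGc₀ : ∀ μ : ℝ, 0 ≤ μ → c₀ ≤ G μ)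
    (lam₀ : ℝ)
    (hR : ∀ v ∈ D, ∀ lam : ℝ, lam₀ ≤ lam →
      ‖v‖ ≤ G lam * (‖(ContinuousLinearMap.adjoint B) v‖
          + ‖A v - ((lam : ℂ) ^ 2) • v‖)) :
    ∀ lam : ℝ, lam₀ ^ 2 ≤ lam →
      (∀ v ∈ D, ∀ w ∈ D,
          (Complex.I * (lam : ℂ)) • v
              - (Complex.I • A v - B ((ContinuousLinearMap.adjoint B) v))
            = (Complex.I * (lam : ℂ)) • w
              - (Complex.I • A w - B ((ContinuousLinearMap.adjoint B) w)) →
          v = w) ∧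
      (∀ f : H, ∃ v ∈ D,
          (Complex.I * (lam : ℂ)) • v
              - (Complex.I • A v - B ((ContinuousLinearMap.adjoint B) v)) = f) ∧
      (∀ v ∈ D,
        ‖v‖ ≤ ((1 + Real.sqrt 2 * ‖B‖) ^ 2 + 2 * Real.sqrt 2 / c₀)
                * (G (Real.sqrt lam)) ^ 2
              * ‖(Complex.I * (lam : ℂ)) • v
                  - (Complex.I • A v - B ((ContinuousLinearMap.adjoint B) v))‖) := by
  intro lam hlam
  set g := G √lam
  have hg : c₀ ≤ g := hGc₀ _ (Real.sqrt_nonneg _)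
  have hg0 : 0 ≤ g := hc₀.le.trans hg
  have him : ∀ v ∈ D, (⟪A v, v⟫_ℂ).im = 0 := fun v hv => (hpos v hv).2
  have hRlam : ∀ v ∈ D, ‖v‖ ≤ g * (‖(B†) v‖ + ‖A v - (lam : ℂ) • v‖) := fun v hv => by
    have h := hR v hv _ (Real.le_sqrt_of_sq_le hlam)
    rwa [← ofReal_pow, Real.sq_sqrt ((sq_nonneg lam₀).trans hlam)] at h
  have hbound : ∀ v ∈ D, ‖v‖ ≤ ((1 + √2 * ‖B‖) ^ 2 + 2 * √2 / c₀) * g ^ 2 *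
      ‖shiftedDampedOp A B lam v‖ := fun v hv =>
    (norm_le_mul_norm_shiftedDampedOp B lam hg0 (him v hv) (hRlam v hv)).trans <|
      mul_le_mul_of_nonneg_right (sq_mul_one_add_add_le (norm_nonneg B) hc₀ hg) (norm_nonneg _)
  have hsurj := map_shiftedDampedOp_eq_top B lam hsym hself him hg0 hRlam
  simp only [← shiftedDampedOp_apply]
  refine ⟨fun v hv w hw hvw => ?_, fun f => ?_, hbound⟩
  · have hvw0 := hbound (v - w) (D.sub_mem hv hw)
    rw [map_sub, hvw, sub_self, norm_zero, mul_zero] at hvw0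
    exact sub_eq_zero.1 (norm_le_zero_iff.1 hvw0)
  · exact Submodule.mem_map.1 (hsurj ▸ Submodule.mem_top)

/-- Under Hypothesis (R) (with `G(μ) ≥ c₀ > 0` for all `μ ≥ 0` and
`λ₀ ≥ 1`) and compactness of the resolvent of `A`, with
`K = (1 + √2‖B‖)² + 2√2/c₀`, for every real `λ ≥ λ₀²` the operator
`iλ·Id − A_S : D(A) → H` (where `A_S = iA − BB*`) is bijective and
`‖(iλ − A_S)⁻¹ f‖ ≤ K G(√λ)² ‖f‖` for all `f ∈ H` (expressed as injectivity on `D(A)`,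
surjectivity onto `H`, and `‖v‖ ≤ K G(√λ)² ‖(iλ − A_S)v‖` for `v ∈ D(A)`). -/
theorem statement9
    {H Y : Type*} [NormedAddCommGroup H] [InnerProductSpace ℂ H] [CompleteSpace H]
    [NormedAddCommGroup Y] [InnerProductSpace ℂ Y] [CompleteSpace Y]
    (D : Submodule ℂ H) (A : H →ₗ[ℂ] H) (B : Y →L[ℂ] H)
    (hdense : Dense (D : Set H))
    (hsym : ∀ v ∈ D, ∀ w ∈ D, (inner ℂ (A v) w : ℂ) = inner ℂ v (A w))
    (hpos : ∀ v ∈ D, 0 ≤ (inner ℂ (A v) v : ℂ).re ∧ (inner ℂ (A v) v : ℂ).im = 0)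
    (hself : ∀ w w' : H, (∀ v ∈ D, (inner ℂ (A v) w : ℂ) = inner ℂ v w') → w ∈ D ∧ A w = w')
    (hres : ∃ R : H →L[ℂ] H, (∀ f : H, R f ∈ D ∧ A (R f) + R f = f) ∧
      (∀ v ∈ D, R (A v + v) = v) ∧ IsCompactOperator (⇑R))
    (G : ℝ → ℝ) (c₀ : ℝ) (hc₀ : 0 < c₀) (hGc₀ : ∀ μ : ℝ, 0 ≤ μ → c₀ ≤ G μ)
    (lam₀ : ℝ) (hlam₀ : 1 ≤ lam₀)
    (hR : ∀ v ∈ D, ∀ lam : ℝ, lam₀ ≤ lam →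
      ‖v‖ ≤ G lam * (‖(ContinuousLinearMap.adjoint B) v‖
          + ‖A v - ((lam : ℂ) ^ 2) • v‖)) :
    ∀ lam : ℝ, lam₀ ^ 2 ≤ lam →
      (∀ v ∈ D, ∀ w ∈ D,
          (Complex.I * (lam : ℂ)) • v
              - (Complex.I • A v - B ((ContinuousLinearMap.adjoint B) v))
            = (Complex.I * (lam : ℂ)) • w
              - (Complex.I • A w - B ((ContinuousLinearMap.adjoint B) w)) →
          v = w) ∧
      (∀ f : H, ∃ v ∈ D,
          (Complex.I * (lam : ℂ)) • v
              - (Complex.I • A v - B ((ContinuousLinearMap.adjoint B) v)) = f) ∧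
      (∀ v ∈ D,
        ‖v‖ ≤ ((1 + Real.sqrt 2 * ‖B‖) ^ 2 + 2 * Real.sqrt 2 / c₀)
                * (G (Real.sqrt lam)) ^ 2
              * ‖(Complex.I * (lam : ℂ)) • v
                  - (Complex.I • A v - B ((ContinuousLinearMap.adjoint B) v))‖) :=
  statement9_general D A B hsym hpos hself G c₀ hc₀ hGc₀ lam₀ hR
end

section
/- Assume Hypothesis (R) with a function G satisfying G(μ) ≥ c₀ > 0 for all μ ≥ 0 and with λ₀ ≥ 1, and assume A has compact resolvent. Set K := (1 + √2 ‖B‖)² + 2√2 / c₀. Then for every z ∈ ℂ with Im z ≥ λ₀² and Re z ≥ −1/(K·G(√(Im z))²), the only u ∈ D(A) satisfying A_S u = z u is u = 0; i.e., the damped Schrödinger generator A_S has no eigenvalue in this region. -/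
/-!
Pair the eigenvalue equation `i A u - B B* u = z u` with `u`: since `⟨A u, u⟩` is real, the
real part gives `‖B* u‖² = -Re z ‖u‖²`, i.e. `‖B* u‖ = r ‖u‖` with `r = √(-Re z)`. With
`λ = √(Im z)` the equation also gives `A u - λ² u = -i Re z u - i B B* u`, so Hypothesis (R)
yields `‖u‖ ≤ G(λ) ((1 + ‖B‖) r + r²) ‖u‖`. The lower bound on `Re z` makes `r` so small that
`G(λ) ((1 + ‖B‖) r + r²) < 1`, forcing `u = 0`.
-/

open Complex

lemma mul_sqrt_sq_add_two_mul_add_lt (m : ℝ) {e : ℝ} (he : 0 < e) :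
    m * √(m ^ 2 + 2 * e) + e < m ^ 2 + 2 * e := by
  have hq := Real.sq_sqrt (by positivity : 0 ≤ m ^ 2 + 2 * e)
  have hq0 := Real.sqrt_nonneg (m ^ 2 + 2 * e)
  nlinarith

lemma mul_add_sq_lt_one {b c₀ g r : ℝ} (hb : 0 ≤ b) (hc₀ : 0 < c₀) (hg : c₀ ≤ g) (hr : 0 ≤ r)
    (hrg : r ^ 2 ≤ 1 / (((1 + √2 * b) ^ 2 + 2 * √2 / c₀) * g ^ 2)) :
    g * ((1 + b) * r + r ^ 2) < 1 := by
  set m := 1 + √2 * b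
  set e := √2 / c₀
  have h2 : (1 : ℝ) ≤ √2 := Real.one_le_sqrt.mpr (by norm_num)
  have he : 0 < e := by positivity
  have hg0 : 0 < g := hc₀.trans_le hg
  rw [mul_div_assoc] at hrg
  have hlt := mul_sqrt_sq_add_two_mul_add_lt m he
  set q := √(m ^ 2 + 2 * e)
  have hq : q ^ 2 = m ^ 2 + 2 * e := Real.sq_sqrt (by positivity)
  have hq0 : 0 ≤ q := Real.sqrt_nonneg _
  set s := g * r
  have hs0 : 0 ≤ s := by positivity
  have hsq : s * q ≤ 1 := by
    rw [← hq, le_div_iff₀ (by positivity)] at hrg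
    nlinarith [mul_nonneg hs0 hq0]
  have hr_le : r ≤ e * s := by
    have : 1 ≤ e * g := by
      rw [div_mul_eq_mul_div, le_div_iff₀ hc₀]; nlinarith
    nlinarith
  have hb_le : 1 + b ≤ m := by nlinarith
  have hm0 : 0 ≤ m * q := mul_nonneg (by positivity) hq0
  have hsq2 : (s * q) ^ 2 ≤ 1 := pow_le_one₀ (by positivity) hsq
  -- `s q ≤ 1` turns `m s + e s²` into at most `(m q + e) / q²`.
  have hK : (m * s + e * s ^ 2) * q ^ 2 < q ^ 2 := by
    calc (m * s + e * s ^ 2) * q ^ 2 = m * q * (s * q) + e * (s * q) ^ 2 := by ring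
      _ ≤ m * q + e := add_le_add (mul_le_of_le_one_right hm0 hsq)
          (mul_le_of_le_one_right he.le hsq2)
      _ < q ^ 2 := hq ▸ hlt
  calc g * ((1 + b) * r + r ^ 2) = (1 + b) * s + s * r := by ring
    _ ≤ m * s + e * s ^ 2 := by nlinarith
    _ < 1 := by nlinarith

section DampedEigenvector

variable {H Y : Type*} [NormedAddCommGroup H] [InnerProductSpace ℂ H] [CompleteSpace H]
  [NormedAddCommGroup Y] [InnerProductSpace ℂ Y] [CompleteSpace Y]
  (A : H →ₗ[ℂ] H) (B : Y →L[ℂ] H) {u : H} {z : ℂ}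

lemma re_mul_norm_sq_eq_neg_norm_adjoint_sq (him : (inner ℂ (A u) u).im = 0)
    (h : I • A u - B (B.adjoint u) = z • u) :
    z.re * ‖u‖ ^ 2 = -‖B.adjoint u‖ ^ 2 := by
  have him' : (inner ℂ u (A u)).im = 0 := by rw [← inner_conj_symm, conj_im, him, neg_zero]
  have h' := congrArg (fun v => (inner ℂ u v).re) h
  simp only [inner_sub_right, inner_smul_right, ← ContinuousLinearMap.adjoint_inner_left,
    inner_self_eq_norm_sq_to_K] at h'
  simpa [← ofReal_pow, him'] using h'.symm

lemma norm_sub_im_smul_le (h : I • A u - B (B.adjoint u) = z • u) :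
    ‖A u - (z.im : ℂ) • u‖ ≤ |z.re| * ‖u‖ + ‖B‖ * ‖B.adjoint u‖ := by
  have hA : A u - (z.im : ℂ) • u = -(I * z.re) • u - I • B (B.adjoint u) := by
    have hIA : I • A u = z • u + B (B.adjoint u) := sub_eq_iff_eq_add.mp h
    have hAu : A u = -I • (I • A u) := by rw [smul_smul]; simp
    have hc : -I * z = -(I * z.re) + z.im := by apply Complex.ext <;> simp
    rw [hAu, hIA, smul_add, smul_smul, hc, add_smul, neg_smul, neg_smul]
    abel
  calc ‖A u - (z.im : ℂ) • u‖ ≤ ‖-(I * z.re) • u‖ + ‖I • B (B.adjoint u)‖ :=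
        hA ▸ norm_sub_le _ _
    _ ≤ |z.re| * ‖u‖ + ‖B‖ * ‖B.adjoint u‖ := by
      rw [norm_smul, norm_smul, norm_neg, norm_mul, norm_I, one_mul, one_mul, norm_real,
        Real.norm_eq_abs]
      gcongr
      exact B.le_opNorm _

end DampedEigenvector

theorem statement10_general
    {H Y : Type*} [NormedAddCommGroup H] [InnerProductSpace ℂ H] [CompleteSpace H]
    [NormedAddCommGroup Y] [InnerProductSpace ℂ Y] [CompleteSpace Y]
    (D : Submodule ℂ H) (A : H →ₗ[ℂ] H) (B : Y →L[ℂ] H)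
    (hpos : ∀ v ∈ D, 0 ≤ (inner ℂ (A v) v : ℂ).re ∧ (inner ℂ (A v) v : ℂ).im = 0)
    (G : ℝ → ℝ) (c₀ : ℝ) (hc₀ : 0 < c₀) (hGc₀ : ∀ μ : ℝ, 0 ≤ μ → c₀ ≤ G μ)
    (lam₀ : ℝ)
    (hR : ∀ v ∈ D, ∀ lam : ℝ, lam₀ ≤ lam →
      ‖v‖ ≤ G lam * (‖(ContinuousLinearMap.adjoint B) v‖
          + ‖A v - ((lam : ℂ) ^ 2) • v‖)) :
    ∀ z : ℂ, lam₀ ^ 2 ≤ z.im →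
      -(1 / (((1 + Real.sqrt 2 * ‖B‖) ^ 2 + 2 * Real.sqrt 2 / c₀)
            * (G (Real.sqrt z.im)) ^ 2)) ≤ z.re →
      ∀ u ∈ D, Complex.I • A u - B ((ContinuousLinearMap.adjoint B) u) = z • u →
        u = 0 := by
  intro z hzim hzre u hu heig
  by_contra hne
  have hu0 : 0 < ‖u‖ := norm_pos_iff.mpr hne
  have hre := re_mul_norm_sq_eq_neg_norm_adjoint_sq A B (hpos u hu).2 heig
  set r := √(-z.re)
  have hzre0 : z.re ≤ 0 := by nlinarith [pow_pos hu0 2]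
  have hr : r ^ 2 = -z.re := Real.sq_sqrt (neg_nonneg.mpr hzre0)
  have hBu : ‖B.adjoint u‖ = r * ‖u‖ := by
    rw [← sq_eq_sq₀ (norm_nonneg _) (by positivity), mul_pow, hr]
    linarith
  set lam := √z.im
  have hlam : ((lam : ℂ) ^ 2) = z.im := by
    norm_cast; exact Real.sq_sqrt ((sq_nonneg lam₀).trans hzim)
  have hbound : ‖u‖ ≤ G lam * ((1 + ‖B‖) * r + r ^ 2) * ‖u‖ := by
    have hGlam : 0 ≤ G lam := hc₀.le.trans (hGc₀ lam (Real.sqrt_nonneg _))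
    calc ‖u‖ ≤ G lam * (‖B.adjoint u‖ + ‖A u - ((lam : ℂ) ^ 2) • u‖) :=
          hR u hu lam (Real.le_sqrt_of_sq_le hzim)
      _ ≤ G lam * (r * ‖u‖ + (r ^ 2 * ‖u‖ + ‖B‖ * (r * ‖u‖))) := by
          rw [hlam, ← hBu, hr, ← abs_of_nonpos hzre0]
          gcongr
          exact norm_sub_im_smul_le A B heig
      _ = G lam * ((1 + ‖B‖) * r + r ^ 2) * ‖u‖ := by ring
  have hlt := mul_add_sq_lt_one (norm_nonneg B) hc₀ (hGc₀ lam (Real.sqrt_nonneg _))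
    (Real.sqrt_nonneg _) (by rw [hr]; linarith)
  nlinarith

/-- Under Hypothesis (R) (with `G(μ) ≥ c₀ > 0` for all `μ ≥ 0` and
`λ₀ ≥ 1`) and compactness of the resolvent of `A`, with `K = (1 + √2‖B‖)² + 2√2/c₀`,
the damped Schrödinger generator `A_S = iA − BB*` has no eigenvalue `z` with
`Im z ≥ λ₀²` and `Re z ≥ −1/(K G(√(Im z))²)`: any `u ∈ D(A)` with `A_S u = z u`
vanishes. -/
theorem statement10
    {H Y : Type*} [NormedAddCommGroup H] [InnerProductSpace ℂ H] [CompleteSpace H]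
    [NormedAddCommGroup Y] [InnerProductSpace ℂ Y] [CompleteSpace Y]
    (D : Submodule ℂ H) (A : H →ₗ[ℂ] H) (B : Y →L[ℂ] H)
    (hdense : Dense (D : Set H))
    (hsym : ∀ v ∈ D, ∀ w ∈ D, (inner ℂ (A v) w : ℂ) = inner ℂ v (A w))
    (hpos : ∀ v ∈ D, 0 ≤ (inner ℂ (A v) v : ℂ).re ∧ (inner ℂ (A v) v : ℂ).im = 0)
    (hself : ∀ w w' : H, (∀ v ∈ D, (inner ℂ (A v) w : ℂ) = inner ℂ v w') → w ∈ D ∧ A w = w')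
    (hres : ∃ R : H →L[ℂ] H, (∀ f : H, R f ∈ D ∧ A (R f) + R f = f) ∧
      (∀ v ∈ D, R (A v + v) = v) ∧ IsCompactOperator (⇑R))
    (G : ℝ → ℝ) (c₀ : ℝ) (hc₀ : 0 < c₀) (hGc₀ : ∀ μ : ℝ, 0 ≤ μ → c₀ ≤ G μ)
    (lam₀ : ℝ) (hlam₀ : 1 ≤ lam₀)
    (hR : ∀ v ∈ D, ∀ lam : ℝ, lam₀ ≤ lam →
      ‖v‖ ≤ G lam * (‖(ContinuousLinearMap.adjoint B) v‖
          + ‖A v - ((lam : ℂ) ^ 2) • v‖)) :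
    ∀ z : ℂ, lam₀ ^ 2 ≤ z.im →
      -(1 / (((1 + Real.sqrt 2 * ‖B‖) ^ 2 + 2 * Real.sqrt 2 / c₀)
            * (G (Real.sqrt z.im)) ^ 2)) ≤ z.re →
      ∀ u ∈ D, Complex.I • A u - B ((ContinuousLinearMap.adjoint B) u) = z • u →
        u = 0 :=
  statement10_general D A B hpos G c₀ hc₀ hGc₀ lam₀ hR
end

section
/- Assume Hypothesis (R). Then for every v ∈ D(A²) (i.e. v ∈ D(A) with Av ∈ D(A)) and every real λ ≥ λ₀²: ‖v‖_H ≤ G(√λ)·( ‖B*v‖_Y + λ^{-1}‖(A² − λ²)v‖_H ). -/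
open Complex

/-!
For `v ∈ D(A²)` factor `A² − λ² = (A + λ)(A − λ)`. Since `A` is accretive, `A + λ` expands
norms by at least `λ`, so `‖(A − λ)v‖ ≤ λ⁻¹ ‖(A² − λ²)v‖`; Hypothesis (R) at `√λ ≥ λ₀` then
gives the estimate.
-/

open scoped InnerProductSpace

section Accretive

variable {𝕜 E : Type*} [RCLike 𝕜] [NormedAddCommGroup E] [InnerProductSpace 𝕜 E]

theorem mul_norm_le_norm_add_smul_of_re_inner_nonneg {x w : E} {c : ℝ} (hc : 0 ≤ c)
    (h : 0 ≤ RCLike.re ⟪x, w⟫_𝕜) : c * ‖w‖ ≤ ‖x + (c : 𝕜) • w‖ := by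
  have hsq : (c * ‖w‖) ^ 2 ≤ ‖x + (c : 𝕜) • w‖ ^ 2 := by
    rw [@norm_add_sq 𝕜, inner_smul_right, RCLike.re_ofReal_mul, norm_smul,
      RCLike.norm_ofReal, abs_of_nonneg hc]
    nlinarith [sq_nonneg ‖x‖]
  exact (pow_le_pow_iff_left₀ (by positivity) (norm_nonneg _) two_ne_zero).1 hsq

end Accretive

theorem LinearMap.apply_apply_sub_sq_smul {R M : Type*} [CommRing R] [AddCommGroup M]
    [Module R M] (A : M →ₗ[R] M) (c : R) (v : M) :
    A (A v) - c ^ 2 • v = A (A v - c • v) + c • (A v - c • v) := by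
  rw [map_sub, map_smul, smul_sub, smul_smul, sq]
  abel

theorem norm_apply_sub_smul_le_of_accretive {H : Type*} [NormedAddCommGroup H]
    [InnerProductSpace ℂ H] (D : Submodule ℂ H) (A : H →ₗ[ℂ] H)
    (hpos : ∀ w ∈ D, 0 ≤ (⟪A w, w⟫_ℂ).re) {v : H} (hv : v ∈ D) (hAv : A v ∈ D)
    {lam : ℝ} (hlam : 0 < lam) :
    ‖A v - (lam : ℂ) • v‖ ≤ lam⁻¹ * ‖A (A v) - ((lam : ℂ) ^ 2) • v‖ := by
  rw [le_inv_mul_iff₀ hlam, A.apply_apply_sub_sq_smul]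
  exact mul_norm_le_norm_add_smul_of_re_inner_nonneg hlam.le
    (hpos _ (D.sub_mem hAv (D.smul_mem _ hv)))

theorem statement15_general
    {H Y : Type*} [NormedAddCommGroup H] [InnerProductSpace ℂ H] [CompleteSpace H]
    [NormedAddCommGroup Y] [InnerProductSpace ℂ Y] [CompleteSpace Y]
    (D : Submodule ℂ H) (A : H →ₗ[ℂ] H) (B : Y →L[ℂ] H)
    (hpos : ∀ v ∈ D, 0 ≤ (inner ℂ (A v) v : ℂ).re ∧ (inner ℂ (A v) v : ℂ).im = 0)
    (G : ℝ → ℝ) (lam₀ : ℝ) (hlam₀ : 1 ≤ lam₀)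
    (hR : ∀ v ∈ D, ∀ lam : ℝ, lam₀ ≤ lam →
      ‖v‖ ≤ G lam * (‖(ContinuousLinearMap.adjoint B) v‖
          + ‖A v - ((lam : ℂ) ^ 2) • v‖)) :
    ∀ v ∈ D, A v ∈ D → ∀ lam : ℝ, lam₀ ^ 2 ≤ lam →
      ‖v‖ ≤ G (Real.sqrt lam)
            * (‖(ContinuousLinearMap.adjoint B) v‖
                + lam⁻¹ * ‖A (A v) - ((lam : ℂ) ^ 2) • v‖) := by
  intro v hv hAv lam hlam
  have hlam_pos : 0 < lam := by nlinarith
  have hsqrt : lam₀ ≤ Real.sqrt lam := (le_abs_self lam₀).trans (Real.abs_le_sqrt hlam)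
  have hRv := hR v hv _ hsqrt
  rw [← ofReal_pow, Real.sq_sqrt hlam_pos.le] at hRv
  have hstep :=
    norm_apply_sub_smul_le_of_accretive D A (fun w hw ↦ (hpos w hw).1) hv hAv hlam_pos
  rcases le_or_gt 0 (G (Real.sqrt lam)) with hG | hG
  · exact hRv.trans (by gcongr)
  · -- a negative constant in (R) forces `v = 0`
    have hv0 : v = 0 := norm_le_zero_iff.mp <| hRv.trans <|
      mul_nonpos_of_nonpos_of_nonneg hG.le (by positivity)
    simp [hv0]

/-- Assume Hypothesis (R): `‖v‖ ≤ G(λ)(‖B*v‖ + ‖(A − λ²)v‖)` for all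
`v ∈ D(A)` and real `λ ≥ λ₀`. Then for every `v ∈ D(A²)` and every real `λ ≥ λ₀²`:
`‖v‖ ≤ G(√λ)(‖B*v‖ + λ⁻¹ ‖(A² − λ²)v‖)`. -/
theorem statement15
    {H Y : Type*} [NormedAddCommGroup H] [InnerProductSpace ℂ H] [CompleteSpace H]
    [NormedAddCommGroup Y] [InnerProductSpace ℂ Y] [CompleteSpace Y]
    (D : Submodule ℂ H) (A : H →ₗ[ℂ] H) (B : Y →L[ℂ] H)
    (hdense : Dense (D : Set H))
    (hsym : ∀ v ∈ D, ∀ w ∈ D, (inner ℂ (A v) w : ℂ) = inner ℂ v (A w))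
    (hpos : ∀ v ∈ D, 0 ≤ (inner ℂ (A v) v : ℂ).re ∧ (inner ℂ (A v) v : ℂ).im = 0)
    (hself : ∀ w w' : H, (∀ v ∈ D, (inner ℂ (A v) w : ℂ) = inner ℂ v w') → w ∈ D ∧ A w = w')
    (G : ℝ → ℝ) (lam₀ : ℝ) (hlam₀ : 1 ≤ lam₀)
    (hR : ∀ v ∈ D, ∀ lam : ℝ, lam₀ ≤ lam →
      ‖v‖ ≤ G lam * (‖(ContinuousLinearMap.adjoint B) v‖
          + ‖A v - ((lam : ℂ) ^ 2) • v‖)) :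
    ∀ v ∈ D, A v ∈ D → ∀ lam : ℝ, lam₀ ^ 2 ≤ lam →
      ‖v‖ ≤ G (Real.sqrt lam)
            * (‖(ContinuousLinearMap.adjoint B) v‖
                + lam⁻¹ * ‖A (A v) - ((lam : ℂ) ^ 2) • v‖) :=
  statement15_general D A B hpos G lam₀ hlam₀ hR
end
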